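/- arXiv:1804.00101 — 2 statements merged into one kernel-verified Lean document; each statement's English description precedes it below -/
import Mathlib

section
/- Let η > 0, let A ⊆ B be finite sets of points in ℝ² with A nonempty, and suppose A is indivisible for η. If 𝒞 is a maximal optimal partition of (B, η), then there is a cluster C ∈ 𝒞 with A ⊆ C. -/
noncomputable section

/-- The Euclidean plane. -/
abbrev Plane := EuclideanSpace ℝ (Fin 2)

/-- Perimeter of a bounded set via Cauchy's formula. -/
noncomputable def perim (C : Set Plane) : ℝ :=
  ∫ θ in (0:ℝ)..(2 * Real.pi),
    sSup ((fun p : Plane => p 0 * Real.cos θ + p 1 * Real.sin θ) '' C)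

/-- `P` is a partition of `A` into nonempty clusters. -/
def IsPartition (A : Set Plane) (P : Finset (Set Plane)) : Prop :=
  (∀ C ∈ P, (C : Set Plane).Nonempty) ∧
  (⋃₀ (P : Set (Set Plane)) = A) ∧
  ((P : Set (Set Plane)).PairwiseDisjoint id)

/-- Cost of a partition with opening cost `η` per cluster. -/
noncomputable def cost (η : ℝ) (P : Finset (Set Plane)) : ℝ :=
  η * P.card + ∑ C ∈ P, perim C

/-- `P` is an optimal partition for `(A, η)`. -/
def IsOptimalPartition (η : ℝ) (A : Set Plane) (P : Finset (Set Plane)) : Prop :=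
  IsPartition A P ∧ ∀ Q : Finset (Set Plane), IsPartition A Q → cost η P ≤ cost η Q

/-- `A` is indivisible for `η`: the one-block partition `{A}` is optimal. -/
def Indivisible (η : ℝ) (A : Set Plane) : Prop :=
  IsOptimalPartition η A {A}

/-- A maximal optimal partition of `(A, η)`. -/
def IsMaximalOptimal (η : ℝ) (A : Set Plane) (P : Finset (Set Plane)) : Prop :=
  IsOptimalPartition η A P ∧
  ¬ ∃ Q : Finset (Set Plane), IsOptimalPartition η A Q ∧ Q.card < P.card ∧
      ∀ C ∈ P, ∃ C' ∈ Q, C ⊆ C'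

/-!
If the clusters of `P` meeting `A` are `C₁, …, Cₖ` with `k ≥ 2`, merge them into one cluster.
This saves `(k - 1) η` in opening costs, and the perimeter grows by at most `(k - 1) η`.
Indeed, pointwise in `θ` the support function of `⋃ Cᵢ` is dominated by that of some `Cⱼ`, and
that of `Cⱼ ∩ A` by that of `A`; integrating gives `h(⋃ Cᵢ) + ∑ h(Cᵢ ∩ A) ≤ h(A) + ∑ h(Cᵢ)`,
while indivisibility of `A` bounds `h(A) - ∑ h(Cᵢ ∩ A)` by `(k - 1) η`. The merged partition
is then optimal, coarser and has fewer clusters, contradicting maximality.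
-/

theorem exists_mem_csSup_image_sUnion_le {α : Type*} (f : α → ℝ) {S : Finset (Set α)}
    (hSfin : ∀ C ∈ S, C.Finite) (hU : (⋃₀ (S : Set (Set α))).Nonempty) :
    ∃ C₀ ∈ S, sSup (f '' ⋃₀ ↑S) ≤ sSup (f '' C₀) := by
  have hUfin : (⋃₀ (S : Set (Set α))).Finite := S.finite_toSet.sUnion hSfin
  obtain ⟨p, ⟨C₀, hC₀, hpC₀⟩, hp⟩ := Set.exists_max_image _ f hUfin hU
  refine ⟨C₀, hC₀, csSup_le (hU.image f) ?_⟩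
  rintro _ ⟨q, hq, rfl⟩
  exact (hp q hq).trans (le_csSup ((hSfin C₀ hC₀).image f).bddAbove ⟨p, hpC₀, rfl⟩)

theorem csSup_image_mono {α : Type*} (f : α → ℝ) {s t : Set α} (ht : t.Finite)
    (hs : s.Nonempty) (hst : s ⊆ t) : sSup (f '' s) ≤ sSup (f '' t) :=
  csSup_le_csSup (ht.image f).bddAbove (hs.image f) (Set.image_mono hst)

theorem csSup_image_sUnion_add_sum_le {α : Type*} (f : α → ℝ) {S : Finset (Set α)} {A : Set α}
    (hS : S.Nonempty) (hSfin : ∀ C ∈ S, C.Finite) (hA : A.Finite)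
    (hSA : ∀ C ∈ S, (C ∩ A).Nonempty) :
    sSup (f '' ⋃₀ ↑S) + ∑ C ∈ S, sSup (f '' (C ∩ A)) ≤
      sSup (f '' A) + ∑ C ∈ S, sSup (f '' C) := by
  classical
  have hU : (⋃₀ (S : Set (Set α))).Nonempty := by
    obtain ⟨C, hC⟩ := hS
    obtain ⟨x, hxC, -⟩ := hSA C hC
    exact ⟨x, C, hC, hxC⟩
  obtain ⟨C₀, hC₀, hUC₀⟩ := exists_mem_csSup_image_sUnion_le f hSfin hU
  have hC₀A : sSup (f '' (C₀ ∩ A)) ≤ sSup (f '' A) :=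
    csSup_image_mono f hA (hSA C₀ hC₀) Set.inter_subset_right
  have hrest : ∑ C ∈ S.erase C₀, sSup (f '' (C ∩ A)) ≤ ∑ C ∈ S.erase C₀, sSup (f '' C) :=
    Finset.sum_le_sum fun C hC =>
      have hCS := Finset.mem_of_mem_erase hC
      csSup_image_mono f (hSfin C hCS) (hSA C hCS) Set.inter_subset_left
  rw [← Finset.add_sum_erase S _ hC₀, ← Finset.add_sum_erase S _ hC₀]
  linarith

def supportFun (C : Set Plane) (θ : ℝ) : ℝ :=
  sSup ((fun p : Plane => p 0 * Real.cos θ + p 1 * Real.sin θ) '' C)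

theorem perim_eq_integral_supportFun (C : Set Plane) :
    perim C = ∫ θ in (0 : ℝ)..(2 * Real.pi), supportFun C θ :=
  rfl

theorem continuous_supportFun {C : Set Plane} (hC : C.Finite) : Continuous (supportFun C) := by
  rcases C.eq_empty_or_nonempty with rfl | hne
  · exact (continuous_const (y := (0 : ℝ))).congr fun θ => by simp [supportFun]
  · have hne' : hC.toFinset.Nonempty := by simpa using hne
    have h : supportFun C = fun θ => hC.toFinset.sup' hne'
        ((fun p : Plane => fun θ => p 0 * Real.cos θ + p 1 * Real.sin θ) · θ) := by
      ext θ
      rw [supportFun, Finset.sup'_eq_csSup_image, Set.Finite.coe_toFinset]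
    rw [h]
    exact Continuous.finset_sup'_apply _ fun p _ => by fun_prop

theorem perim_sUnion_add_sum_perim_inter_le {S : Finset (Set Plane)} {A : Set Plane}
    (hS : S.Nonempty) (hSfin : ∀ C ∈ S, C.Finite) (hA : A.Finite)
    (hSA : ∀ C ∈ S, (C ∩ A).Nonempty) :
    perim (⋃₀ ↑S) + ∑ C ∈ S, perim (C ∩ A) ≤ perim A + ∑ C ∈ S, perim C := by
  have hint : ∀ {C : Set Plane}, C.Finite →
      IntervalIntegrable (supportFun C) MeasureTheory.volume 0 (2 * Real.pi) :=
    fun hC => (continuous_supportFun hC).intervalIntegrable _ _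
  have hsum : ∀ g : Set Plane → Set Plane, (∀ C ∈ S, (g C).Finite) → IntervalIntegrable
      (fun θ => ∑ C ∈ S, supportFun (g C) θ) MeasureTheory.volume 0 (2 * Real.pi) :=
    fun g hg => (continuous_finsetSum _ fun C hC =>
      continuous_supportFun (hg C hC)).intervalIntegrable _ _
  have hU := hint (S.finite_toSet.sUnion hSfin)
  have hSA' := hsum (· ∩ A) fun C hC => (hSfin C hC).inter_of_left A
  have hS' := hsum (fun C => C) hSfin
  simp only [perim_eq_integral_supportFun]
  rw [← intervalIntegral.integral_finsetSum fun C hC => hint ((hSfin C hC).inter_of_left A),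
    ← intervalIntegral.integral_finsetSum fun C hC => hint (hSfin C hC),
    ← intervalIntegral.integral_add hU hSA', ← intervalIntegral.integral_add (hint hA) hS']
  exact intervalIntegral.integral_mono (by positivity) (hU.add hSA') ((hint hA).add hS')
    fun θ => csSup_image_sUnion_add_sum_le _ hS hSfin hA hSA

open Classical in
def clustersMeeting (P : Finset (Set Plane)) (A : Set Plane) : Finset (Set Plane) :=
  P.filter fun C => (C ∩ A).Nonempty

open Classical in
def mergeClusters (P S : Finset (Set Plane)) : Finset (Set Plane) :=
  insert (⋃₀ ↑S) (P \ S)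

theorem clustersMeeting_subset (P : Finset (Set Plane)) (A : Set Plane) :
    clustersMeeting P A ⊆ P := by
  classical
  exact Finset.filter_subset _ _

theorem inter_nonempty_of_mem_clustersMeeting {P : Finset (Set Plane)} {A C : Set Plane}
    (hC : C ∈ clustersMeeting P A) : (C ∩ A).Nonempty := by
  classical
  exact (Finset.mem_filter.1 hC).2

theorem exists_subset_mem_mergeClusters (P S : Finset (Set Plane)) :
    ∀ C ∈ P, ∃ C' ∈ mergeClusters P S, C ⊆ C' := by
  classical
  intro C hC
  by_cases hCS : C ∈ S
  · exact ⟨⋃₀ ↑S, Finset.mem_insert_self _ _, Set.subset_sUnion_of_mem hCS⟩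
  · exact ⟨C, Finset.mem_insert_of_mem (Finset.mem_sdiff.2 ⟨hC, hCS⟩), subset_rfl⟩

theorem Indivisible.nonempty {η : ℝ} {A : Set Plane} (hA : Indivisible η A) : A.Nonempty :=
  hA.1.1 A (Finset.mem_singleton_self A)

namespace IsPartition

variable {A B : Set Plane} {P S : Finset (Set Plane)}

theorem subset_of_mem (hP : IsPartition B P) {C : Set Plane} (hC : C ∈ P) : C ⊆ B :=
  hP.2.1 ▸ Set.subset_sUnion_of_mem hC

theorem finite_of_mem (hP : IsPartition B P) (hB : B.Finite) {C : Set Plane} (hC : C ∈ P) :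
    C.Finite :=
  hB.subset (hP.subset_of_mem hC)

theorem disjoint (hP : IsPartition B P) {C D : Set Plane} (hC : C ∈ P) (hD : D ∈ P)
    (hCD : C ≠ D) : Disjoint C D :=
  hP.2.2 hC hD hCD

theorem subset_sUnion_clustersMeeting (hP : IsPartition B P) (hAB : A ⊆ B) :
    A ⊆ ⋃₀ ↑(clustersMeeting P A) := by
  classical
  intro a ha
  obtain ⟨C, hC, haC⟩ : a ∈ ⋃₀ (P : Set (Set Plane)) := hP.2.1 ▸ hAB ha
  exact ⟨C, Finset.mem_filter.2 ⟨hC, a, haC, ha⟩, haC⟩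

theorem clustersMeeting_nonempty (hP : IsPartition B P) (hAB : A ⊆ B) (hA : A.Nonempty) :
    (clustersMeeting P A).Nonempty := by
  obtain ⟨a, ha⟩ := hA
  obtain ⟨C, hC, -⟩ := hP.subset_sUnion_clustersMeeting hAB ha
  exact ⟨C, hC⟩

theorem injOn_inter_clustersMeeting (hP : IsPartition B P) :
    Set.InjOn (· ∩ A) ↑(clustersMeeting P A) := by
  intro C hC D hD (hCD : C ∩ A = D ∩ A)
  by_contra hne
  obtain ⟨a, haC, haA⟩ := inter_nonempty_of_mem_clustersMeeting hC
  have haD : a ∈ D ∩ A := hCD ▸ ⟨haC, haA⟩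
  exact Set.disjoint_left.1 (hP.disjoint (clustersMeeting_subset P A hC)
    (clustersMeeting_subset P A hD) hne) haC haD.1

theorem image_inter_clustersMeeting [DecidableEq (Set Plane)] (hP : IsPartition B P)
    (hAB : A ⊆ B) : IsPartition A ((clustersMeeting P A).image (· ∩ A)) := by
  refine ⟨?_, ?_, ?_⟩
  · simp only [Finset.forall_mem_image]
    exact fun C hC => inter_nonempty_of_mem_clustersMeeting hC
  · apply subset_antisymm
    · rintro a ⟨_, hT, haT⟩
      obtain ⟨C, -, rfl⟩ := Finset.mem_image.1 hT
      exact haT.2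
    · intro a ha
      obtain ⟨C, hC, haC⟩ := hP.subset_sUnion_clustersMeeting hAB ha
      exact ⟨C ∩ A, Finset.mem_image_of_mem _ hC, haC, ha⟩
  · rw [Finset.coe_image]
    rintro _ ⟨C, hC, rfl⟩ _ ⟨D, hD, rfl⟩ hCD
    exact (hP.disjoint (clustersMeeting_subset P A hC) (clustersMeeting_subset P A hD)
      fun h => hCD (h ▸ rfl)).mono Set.inter_subset_left Set.inter_subset_left

theorem sUnion_notMem_sdiff [DecidableEq (Set Plane)] (hP : IsPartition B P) (hS : S ⊆ P)
    (hSne : S.Nonempty) : ⋃₀ ↑S ∉ P \ S := by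
  intro hU
  obtain ⟨hUP, hUS⟩ := Finset.mem_sdiff.1 hU
  obtain ⟨C, hC⟩ := hSne
  have hCU : C ⊆ ⋃₀ ↑S := Set.subset_sUnion_of_mem hC
  obtain ⟨x, hx⟩ := hP.1 C (hS hC)
  exact Set.disjoint_left.1 (hP.disjoint (hS hC) hUP fun h => hUS (h ▸ hC)) hx (hCU hx)

theorem card_mergeClusters (hP : IsPartition B P) (hS : S ⊆ P) (hSne : S.Nonempty) :
    (mergeClusters P S).card + S.card = P.card + 1 := by
  classical
  rw [mergeClusters, Finset.card_insert_of_notMem (hP.sUnion_notMem_sdiff hS hSne),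
    add_right_comm, Finset.card_sdiff_add_card_eq_card hS]

theorem mergeClusters (hP : IsPartition B P) (hS : S ⊆ P) (hSne : S.Nonempty) :
    IsPartition B (mergeClusters P S) := by
  classical
  refine ⟨?_, ?_, ?_⟩
  · intro C hC
    rcases Finset.mem_insert.1 hC with rfl | hC
    · obtain ⟨D, hD⟩ := hSne
      exact (hP.1 D (hS hD)).mono (Set.subset_sUnion_of_mem hD)
    · exact hP.1 C (Finset.mem_sdiff.1 hC).1
  · rw [_root_.mergeClusters, Finset.coe_insert, Set.sUnion_insert, Finset.coe_sdiff,
      ← Set.sUnion_union, Set.union_sdiff_cancel (Finset.coe_subset.2 hS), hP.2.1]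
  · rw [_root_.mergeClusters, Finset.coe_insert]
    refine (hP.2.2.subset (Finset.coe_subset.2 Finset.sdiff_subset)).insert ?_
    intro D hD _
    refine Set.disjoint_sUnion_left.2 fun C hC => hP.disjoint (hS hC) (Finset.mem_sdiff.1 hD).1 ?_
    exact fun h => (Finset.mem_sdiff.1 hD).2 (by simpa [h] using hC)

end IsPartition

theorem cost_mergeClusters_clustersMeeting_le {η : ℝ} {A B : Set Plane}
    {P : Finset (Set Plane)} (hP : IsPartition B P) (hB : B.Finite) (hAB : A ⊆ B)
    (hA : Indivisible η A) :
    cost η (mergeClusters P (clustersMeeting P A)) ≤ cost η P := by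
  classical
  set S := clustersMeeting P A
  have hSP : S ⊆ P := clustersMeeting_subset P A
  have hSne : S.Nonempty := hP.clustersMeeting_nonempty hAB hA.nonempty
  have hinj := hP.injOn_inter_clustersMeeting (A := A)
  have hindiv := hA.2 _ (hP.image_inter_clustersMeeting hAB)
  rw [cost, cost, Finset.card_image_of_injOn hinj, Finset.sum_image hinj] at hindiv
  have hperim := perim_sUnion_add_sum_perim_inter_le hSne
    (fun C hC => hP.finite_of_mem hB (hSP hC)) (hB.subset hAB)
    (fun C hC => inter_nonempty_of_mem_clustersMeeting hC)
  have hcard : ((mergeClusters P S).card : ℝ) + S.card = P.card + 1 := by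
    exact_mod_cast hP.card_mergeClusters hSP hSne
  have hmerge : cost η (mergeClusters P S)
      = η * (mergeClusters P S).card + perim (⋃₀ ↑S) + ∑ C ∈ P \ S, perim C := by
    rw [cost, mergeClusters, Finset.sum_insert (hP.sUnion_notMem_sdiff hSP hSne), add_assoc]
  have hsplit : cost η P = η * P.card + ∑ C ∈ S, perim C + ∑ C ∈ P \ S, perim C := by
    rw [cost, ← Finset.sum_sdiff hSP]
    ring
  rw [hmerge, hsplit]
  simp only [Finset.card_singleton, Finset.sum_singleton, Nat.cast_one] at hindiv
  linear_combination hindiv + hperim + η * hcard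

theorem IsMaximalOptimal.card_le_one_of_cost_mergeClusters_le {η : ℝ} {B : Set Plane}
    {P S : Finset (Set Plane)} (hP : IsMaximalOptimal η B P) (hS : S ⊆ P)
    (hcost : cost η (mergeClusters P S) ≤ cost η P) : S.card ≤ 1 := by
  by_contra! hS1
  have hSne : S.Nonempty := Finset.card_pos.1 (by omega)
  have hcard := hP.1.1.card_mergeClusters hS hSne
  exact hP.2 ⟨mergeClusters P S,
    ⟨hP.1.1.mergeClusters hS hSne, fun Q hQ => hcost.trans (hP.1.2 Q hQ)⟩,
    by omega, exists_subset_mem_mergeClusters P S⟩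

theorem indivisible_subset_contained_in_cluster_general
    (η : ℝ)
    (A B : Set Plane) (hAB : A ⊆ B) (hB : B.Finite)
    (hAind : Indivisible η A)
    (P : Finset (Set Plane)) (hP : IsMaximalOptimal η B P) :
    ∃ C ∈ P, A ⊆ C := by
  have hPpart := hP.1.1
  have hSne := hPpart.clustersMeeting_nonempty hAB hAind.nonempty
  have hS1 := hP.card_le_one_of_cost_mergeClusters_le (clustersMeeting_subset P A)
    (cost_mergeClusters_clustersMeeting_le hPpart hB hAB hAind)
  obtain ⟨C, hC⟩ := Finset.card_eq_one.1 (le_antisymm hS1 hSne.card_pos)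
  refine ⟨C, clustersMeeting_subset P A (hC ▸ Finset.mem_singleton_self C), ?_⟩
  simpa [hC] using hPpart.subset_sUnion_clustersMeeting hAB

/-- an indivisible subset is contained in a cluster of a maximal
optimal partition. -/
theorem indivisible_subset_contained_in_cluster
    (η : ℝ) (hη : 0 < η)
    (A B : Set Plane) (hAB : A ⊆ B) (hB : B.Finite) (hAne : A.Nonempty)
    (hAind : Indivisible η A)
    (P : Finset (Set Plane)) (hP : IsMaximalOptimal η B P) :
    ∃ C ∈ P, A ⊆ C :=
  indivisible_subset_contained_in_cluster_general η A B hAB hB hAind P hP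

end
end

section
/- Let A be a finite nonempty set of n points in ℝ², let η > 0, and let p, q ∈ A satisfy ‖p − q‖ > n·η/2. Then in every optimal partition of (A, η), the points p and q lie in different clusters. (In particular, the optimal cost satisfies Opt(A, η) ≤ n·η, since the partition into n singletons has cost n·η.) -/
noncomputable section

open Real intervalIntegral

/-!
The support function `θ ↦ sup_{x ∈ C} (x₀ cos θ + x₁ sin θ)` of a cluster containing `p` and `q`
dominates the maximum of the two linear functions belonging to `p` and `q`, that is, their mean
plus half the absolute value of their difference. The mean integrates to `0` over a period, and
`|(p - q)₀ cos θ + (p - q)₁ sin θ| = ‖p - q‖ |cos (θ - φ)|` integrates to `4‖p - q‖`, so such a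
cluster has perimeter at least `2‖p - q‖ > nη`. But the partition into singletons costs only `nη`,
so an optimal partition cannot contain it.
-/

theorem integral_abs_cos_zero_two_pi : ∫ θ in (0:ℝ)..2 * π, |cos θ| = 4 := by
  have hper : Function.Periodic (fun θ => |cos θ|) (2 * π) := fun θ => by simp
  have hshift := hper.intervalIntegral_add_eq (-(π / 2)) 0
  have hint : ∀ a b : ℝ, IntervalIntegrable (fun θ => |cos θ|) MeasureTheory.volume a b :=
    fun _ _ => continuous_cos.abs.intervalIntegrable _ _
  have hpos : ∫ θ in -(π / 2)..π / 2, |cos θ| = 2 := by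
    rw [integral_congr (g := cos) fun θ hθ => ?_, integral_cos]
    · rw [sin_pi_div_two, sin_neg, sin_pi_div_two]; norm_num
    · rw [Set.uIcc_of_le (by linarith [pi_pos])] at hθ
      exact abs_of_nonneg (cos_nonneg_of_mem_Icc hθ)
  have hneg : ∫ θ in π / 2..3 * π / 2, |cos θ| = 2 := by
    rw [integral_congr (g := fun θ => -cos θ) fun θ hθ => ?_, integral_neg, integral_cos]
    · have : sin (3 * π / 2) = -1 := by
        rw [show 3 * π / 2 = π / 2 + π by ring, sin_add_pi, sin_pi_div_two]
      rw [this, sin_pi_div_two]; norm_num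
    · rw [Set.uIcc_of_le (by linarith [pi_pos])] at hθ
      exact abs_of_nonpos (cos_nonpos_of_pi_div_two_le_of_le hθ.1 (by linarith [hθ.2]))
  rw [zero_add] at hshift
  rw [← hshift, ← integral_add_adjacent_intervals (hint _ (π / 2)) (hint _ _), hpos,
    show -(π / 2) + 2 * π = 3 * π / 2 by ring, hneg]
  norm_num

theorem integral_abs_cos_sub (φ : ℝ) : ∫ θ in (0:ℝ)..2 * π, |cos (θ - φ)| = 4 := by
  have hper : Function.Periodic (fun θ => |cos θ|) (2 * π) := fun θ => by simp
  rw [integral_comp_sub_right (fun θ => |cos θ|), zero_sub, sub_eq_neg_add,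
    hper.intervalIntegral_add_eq (-φ) 0, zero_add, integral_abs_cos_zero_two_pi]

theorem Complex.re_mul_cos_add_im_mul_sin (z : ℂ) (θ : ℝ) :
    z.re * Real.cos θ + z.im * Real.sin θ = ‖z‖ * Real.cos (θ - z.arg) := by
  rw [Real.cos_sub, ← Complex.norm_mul_cos_arg, ← Complex.norm_mul_sin_arg]
  ring

theorem integral_abs_re_mul_cos_add_im_mul_sin (z : ℂ) :
    ∫ θ in (0:ℝ)..2 * π, |z.re * cos θ + z.im * sin θ| = 4 * ‖z‖ := by
  simp_rw [Complex.re_mul_cos_add_im_mul_sin, abs_mul, abs_norm, integral_const_mul,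
    integral_abs_cos_sub, mul_comm]

theorem integral_mul_cos_add_mul_sin (a b : ℝ) :
    ∫ θ in (0:ℝ)..2 * π, (a * cos θ + b * sin θ) = 0 := by
  rw [integral_add ((continuous_cos.intervalIntegrable _ _).const_mul a)
    ((continuous_sin.intervalIntegrable _ _).const_mul b)]
  simp [integral_const_mul]

/-- The function whose supremum over `C` is integrated in `perim C`. -/
def dirComp (x : Plane) (θ : ℝ) : ℝ := x 0 * cos θ + x 1 * sin θ

theorem continuous_dirComp (x : Plane) : Continuous (dirComp x) := by
  unfold dirComp; fun_prop

theorem dirComp_sub (x y : Plane) (θ : ℝ) : dirComp (x - y) θ = dirComp x θ - dirComp y θ := by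
  simp only [dirComp, PiLp.sub_apply]; ring

theorem integral_dirComp (x : Plane) : ∫ θ in (0:ℝ)..2 * π, dirComp x θ = 0 :=
  integral_mul_cos_add_mul_sin _ _

theorem integral_abs_dirComp (x : Plane) : ∫ θ in (0:ℝ)..2 * π, |dirComp x θ| = 4 * ‖x‖ := by
  have hnorm : ‖(⟨x 0, x 1⟩ : ℂ)‖ = ‖x‖ := by
    simp [EuclideanSpace.norm_eq, Complex.norm_eq_sqrt_sq_add_sq, Fin.sum_univ_two]
  rw [← hnorm, ← integral_abs_re_mul_cos_add_im_mul_sin]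
  rfl

theorem perim_eq_integral_sup' (C : Finset Plane) (hC : C.Nonempty) :
    perim C = ∫ θ in (0:ℝ)..2 * π, C.sup' hC (dirComp · θ) := by
  unfold perim
  congr 1 with θ
  rw [Finset.sup'_eq_csSup_image]
  rfl

theorem perim_singleton (x : Plane) : perim {x} = 0 := by
  simp only [perim, Set.image_singleton, csSup_singleton]
  exact integral_dirComp x

theorem two_mul_dist_le_perim {C : Set Plane} (hC : C.Finite) {p q : Plane} (hp : p ∈ C)
    (hq : q ∈ C) : 2 * dist p q ≤ perim C := by
  have hne : hC.toFinset.Nonempty := ⟨p, hC.mem_toFinset.mpr hp⟩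
  set F : ℝ → ℝ := fun θ => hC.toFinset.sup' hne (dirComp · θ)
  have hF : Continuous F := Continuous.finset_sup'_apply hne fun x _ => continuous_dirComp x
  have hpF : ∀ θ, dirComp p θ ≤ F θ := fun θ => Finset.le_sup' (dirComp · θ) (by simpa)
  have hqF : ∀ θ, dirComp q θ ≤ F θ := fun θ => Finset.le_sup' (dirComp · θ) (by simpa)
  have hmax : ∀ θ, dirComp p θ + dirComp q θ + |dirComp (p - q) θ| ≤ 2 * F θ := fun θ => by
    rw [dirComp_sub]
    cases abs_cases (dirComp p θ - dirComp q θ) <;> linarith [hpF θ, hqF θ]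
  have hint : ∀ x, IntervalIntegrable (dirComp x) MeasureTheory.volume 0 (2 * π) :=
    fun x => (continuous_dirComp x).intervalIntegrable _ _
  have habs : IntervalIntegrable (fun θ => |dirComp (p - q) θ|) MeasureTheory.volume 0 (2 * π) :=
    (continuous_dirComp _).abs.intervalIntegrable _ _
  have hlower : ∫ θ in (0:ℝ)..2 * π, (dirComp p θ + dirComp q θ + |dirComp (p - q) θ|)
      = 4 * dist p q := by
    rw [integral_add ((hint p).add (hint q)) habs, integral_add (hint p) (hint q),
      integral_dirComp, integral_dirComp, integral_abs_dirComp, dist_eq_norm]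
    ring
  have hmono := integral_mono_on (by positivity) (((hint p).add (hint q)).add habs)
    ((hF.intervalIntegrable _ _).const_mul 2) fun θ _ => hmax θ
  rw [hlower, integral_const_mul] at hmono
  rw [← hC.coe_toFinset, perim_eq_integral_sup' _ hne]
  linarith

theorem perim_nonneg {C : Set Plane} (hC : C.Finite) : 0 ≤ perim C := by
  obtain rfl | ⟨x, hx⟩ := C.eq_empty_or_nonempty
  · simp [perim]
  · simpa using two_mul_dist_le_perim hC hx hx

section Partition

variable {A : Set Plane} {η : ℝ} {P : Finset (Set Plane)}

theorem IsPartition.subset (hP : IsPartition A P) {C : Set Plane} (hC : C ∈ P) : C ⊆ A :=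
  hP.2.1 ▸ Set.subset_sUnion_of_mem (Finset.mem_coe.mpr hC)

theorem IsPartition.two_mul_dist_le_cost (hA : A.Finite) (hη : 0 ≤ η) (hP : IsPartition A P)
    {C : Set Plane} (hC : C ∈ P) {p q : Plane} (hp : p ∈ C) (hq : q ∈ C) :
    2 * dist p q ≤ cost η P := by
  have hpq := two_mul_dist_le_perim (hA.subset (hP.subset hC)) hp hq
  have hsum : perim C ≤ ∑ D ∈ P, perim D :=
    Finset.single_le_sum (fun D hD => perim_nonneg (hA.subset (hP.subset hD))) hC
  have hopen : 0 ≤ η * P.card := by positivity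
  rw [cost]
  linarith

def singletons (hA : A.Finite) : Finset (Set Plane) :=
  hA.toFinset.image ({·})

theorem isPartition_singletons (hA : A.Finite) : IsPartition A (singletons hA) := by
  refine ⟨?_, ?_, ?_⟩
  · simp [singletons]
  · ext y; simp [singletons]
  · rintro _ hC _ hD hCD
    obtain ⟨x, -, rfl⟩ := Finset.mem_image.mp (Finset.mem_coe.mp hC)
    obtain ⟨y, -, rfl⟩ := Finset.mem_image.mp (Finset.mem_coe.mp hD)
    exact Set.disjoint_singleton.mpr fun h => hCD (h ▸ rfl)

theorem cost_singletons (hA : A.Finite) (η : ℝ) : cost η (singletons hA) = A.ncard * η := by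
  rw [cost, singletons, Finset.card_image_of_injective _ Set.singleton_injective,
    Finset.sum_image fun _ _ _ _ h => Set.singleton_injective h, Set.ncard_eq_toFinset_card A hA]
  simp [perim_singleton, mul_comm]

theorem IsOptimalPartition.cost_le_ncard_mul (hA : A.Finite) (hP : IsOptimalPartition η A P) :
    cost η P ≤ A.ncard * η :=
  (hP.2 _ (isPartition_singletons hA)).trans_eq (cost_singletons hA η)

end Partition

theorem far_points_different_clusters_general
    (A : Set Plane) (hA : A.Finite) (η : ℝ) (hη : 0 < η)
    (p q : Plane)
    (hfar : dist p q > (A.ncard : ℝ) * η / 2)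
    (P : Finset (Set Plane)) (hP : IsOptimalPartition η A P) :
    (∀ C ∈ P, ¬ (p ∈ C ∧ q ∈ C)) ∧ cost η P ≤ (A.ncard : ℝ) * η := by
  have hcost := hP.cost_le_ncard_mul hA
  refine ⟨fun C hC ⟨hpC, hqC⟩ => ?_, hcost⟩
  have hpq := hP.1.two_mul_dist_le_cost hA hη.le hC hpC hqC
  linarith

/-- two points at distance more than n·η/2 lie in different clusters
of every optimal partition; moreover the optimal cost is at most n·η. -/
theorem far_points_different_clusters
    (A : Set Plane) (hA : A.Finite) (hAne : A.Nonempty) (η : ℝ) (hη : 0 < η)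
    (p q : Plane) (hp : p ∈ A) (hq : q ∈ A)
    (hfar : dist p q > (A.ncard : ℝ) * η / 2)
    (P : Finset (Set Plane)) (hP : IsOptimalPartition η A P) :
    (∀ C ∈ P, ¬ (p ∈ C ∧ q ∈ C)) ∧ cost η P ≤ (A.ncard : ℝ) * η :=
  far_points_different_clusters_general A hA η hη p q hfar P hP

end
end
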